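/- Consider the network with links K = {a, b, c} whose interference graph G has exactly the edges {a,b} and {b,c}, and the fading structure π with π({a,b}) = π({b,c}) = π({a,b,c}) = 1/3 and π(J) = 0 for all other J ⊆ K. Then the standard (non-fading) local pooling factor of each of the induced subgraphs on {a,b}, on {b,c}, and on {a,b,c} equals 1, while σ*_G(π) ≤ 4/5 < 1 = Σ_{J⊆K} π(J)·σ*(G[J]). Hence the Fading-LPF is strictly smaller than the π-weighted average of the per-state local pooling factors. -/

import Mathlib

open scoped BigOperators
open Filter MeasureTheory ProbabilityTheory

/-- `S` is an independent set of the interference graph `G` contained in the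
set of links `J` (pairwise non-adjacent links). -/
def IsIndepIn {V : Type*} (G : SimpleGraph V) (J S : Finset V) : Prop :=
  S ⊆ J ∧ ∀ u ∈ S, ∀ v ∈ S, ¬ G.Adj u v

/-- `S` is a maximal independent set of `J`. -/
def IsMaxIndepIn {V : Type*} (G : SimpleGraph V) (J S : Finset V) : Prop :=
  IsIndepIn G J S ∧ ∀ T, IsIndepIn G J T → S ⊆ T → S = T

/-- 0/1 indicator vector of a finite set of links. -/
def indVec {V : Type*} [DecidableEq V] (S : Finset V) : V → ℝ :=
  fun v => if v ∈ S then 1 else 0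

/-- `M_{J,L}` : the (finite) set of 0/1 indicator vectors of the maximal independent
sets of `J`; the vectors are encoded in the ambient space `ℝ^V`, coordinates outside `J`
are automatically `0`. -/
def Mset {V : Type*} [DecidableEq V] (G : SimpleGraph V) (J : Finset V) : Set (V → ℝ) :=
  indVec '' {S | IsMaxIndepIn G J S}

/-- `CH(M_{J,L})` : the convex hull of `M_{J,L}`. -/
noncomputable def CHM {V : Type*} [DecidableEq V] (G : SimpleGraph V) (J : Finset V) :
    Set (V → ℝ) :=
  convexHull ℝ (Mset G J)

/-- A fading structure `π` on the set of links: nonnegative weights summing to one. -/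
def IsFading {V : Type*} [Fintype V] [DecidableEq V] (π : Finset V → ℝ) : Prop :=
  (∀ J, 0 ≤ π J) ∧ ∑ J : Finset V, π J = 1

/-- `Φ(L) = { Σ_{J ⊆ K} π(J) η_J : η_J ∈ CH(M_{J∩L,L}) }`. -/
def Phi {V : Type*} [Fintype V] [DecidableEq V] (G : SimpleGraph V) (π : Finset V → ℝ)
    (L : Finset V) : Set (V → ℝ) :=
  {φ | ∃ η : Finset V → V → ℝ, (∀ J, η J ∈ CHM G (J ∩ L)) ∧
    φ = ∑ J : Finset V, π J • η J}

/-- The fading local pooling factor `σ*_L(π)` of a set of links `L`. -/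
noncomputable def sigmaL {V : Type*} [Fintype V] [DecidableEq V] (G : SimpleGraph V)
    (π : Finset V → ℝ) (L : Finset V) : ℝ :=
  sInf {σ : ℝ | 0 ≤ σ ∧ ∃ φ1 ∈ Phi G π L, ∃ φ2 ∈ Phi G π L, ∀ v ∈ L, φ2 v ≤ σ * φ1 v}

/-- The Fading-LPF `σ*_G(π)` of the network: minimum of `σ*_L(π)` over nonempty `L ⊆ K`. -/
noncomputable def sigmaG {V : Type*} [Fintype V] [DecidableEq V] (G : SimpleGraph V)
    (π : Finset V → ℝ) : ℝ :=
  sInf (sigmaL G π '' {L : Finset V | L.Nonempty})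
/-- The marginal distribution `π_L` induced on a subset of links `L`. -/
noncomputable def marginal {V : Type*} [Fintype V] [DecidableEq V] (π : Finset V → ℝ)
    (L J : Finset V) : ℝ :=
  ∑ I : Finset V, if I ∩ L = J then π I else 0

/-- `n(M_J)`: minimum cardinality of a maximal independent set of `J`. -/
noncomputable def nM {V : Type*} (G : SimpleGraph V) (J : Finset V) : ℕ :=
  sInf (Finset.card '' {S | IsMaxIndepIn G J S})

/-- `N(M_J)`: maximum cardinality of a maximal independent set of `J`. -/
noncomputable def NM {V : Type*} (G : SimpleGraph V) (J : Finset V) : ℕ :=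
  sSup (Finset.card '' {S | IsMaxIndepIn G J S})

/-- interference degree of a link `l`: maximum cardinality of an independent set of `G`
contained in the closed neighborhood of `l`. -/
noncomputable def dI {V : Type*} (G : SimpleGraph V) (l : V) : ℕ :=
  sSup (Finset.card '' {S : Finset V | (∀ u ∈ S, ∀ v ∈ S, ¬ G.Adj u v) ∧
    ∀ v ∈ S, v = l ∨ G.Adj l v})

/-- interference degree `d_I(G)` of the whole interference graph. -/
noncomputable def dIG {V : Type*} (G : SimpleGraph V) : ℕ :=
  sSup (Set.range (dI G))

/-- interference degree `d_I(S)` of the subgraph of `G` induced on the set of links `S`. -/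
noncomputable def dISet {V : Type*} (G : SimpleGraph V) (Sset : Finset V) : ℕ :=
  sSup (Finset.card '' {T : Finset V | T ⊆ Sset ∧ (∀ u ∈ T, ∀ v ∈ T, ¬ G.Adj u v) ∧
    ∃ l ∈ Sset, ∀ v ∈ T, v = l ∨ G.Adj l v})

/-- The throughput region `Λ_f`. -/
def LambdaF {V : Type*} [Fintype V] [DecidableEq V] (G : SimpleGraph V) (π : Finset V → ℝ) :
    Set (V → ℝ) :=
  {lam | (∀ v, 0 < lam v) ∧ ∃ η : Finset V → V → ℝ,
    (∀ J, η J ∈ CHM G J) ∧ ∀ v, lam v ≤ ∑ J : Finset V, π J * η J v}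

/-- The scaled region `Λ_f(x)`. -/
def LambdaX {V : Type*} [Fintype V] [DecidableEq V] (G : SimpleGraph V) (π : Finset V → ℝ)
    (x : Finset V → ℝ) : Set (V → ℝ) :=
  {lam | (∀ v, 0 < lam v) ∧ ∃ η : Finset V → V → ℝ,
    (∀ J, η J ∈ CHM G J) ∧ ∀ v, lam v ≤ ∑ J : Finset V, x J * π J * η J v}

/-- The standard (non-fading) local pooling factor of a graph `H`. -/
noncomputable def stdLPF (W : Type*) [Fintype W] [DecidableEq W] (H : SimpleGraph W) : ℝ :=
  sInf ((fun L => sInf {σ : ℝ | 0 ≤ σ ∧ ∃ φ1 ∈ CHM H L, ∃ φ2 ∈ CHM H L,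
    ∀ v ∈ L, φ2 v ≤ σ * φ1 v}) '' {L : Finset W | L.Nonempty})

/-- discrete measurable structure on global channel states -/
instance {α : Type*} : MeasurableSpace (Finset α) := ⊤

/-- The queue-length process `Q` evolves according to
`Q_l[t+1] = (Q_l[t] − C_l[t]·1{l ∈ S[t]})⁺ + A_l[t]`, `Q_l[0] = 0`,
where `GS t ω` is the set of 'ON' links and `S t ω` is the schedule. -/
def QueueEvol {V : Type*} [DecidableEq V] {Ω : Type*} (A : ℕ → V → Ω → ℕ)
    (GS S : ℕ → Ω → Finset V) (Q : ℕ → V → Ω → ℕ) : Prop :=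
  (∀ l ω, Q 0 l ω = 0) ∧
  ∀ t l ω, Q (t + 1) l ω =
    (Q t l ω - (if l ∈ GS t ω ∧ l ∈ S t ω then 1 else 0)) + A t l ω

/-- `S` is a greedy maximal schedule for the weights `w`: a maximal independent set of `G`
with an enumeration `s_0, …, s_{k-1}` such that each `s_i` has maximal weight among the
links neither equal nor adjacent to any of `s_0, …, s_{i-1}`. -/
def IsGreedySchedule {V : Type*} [Fintype V] [DecidableEq V] (G : SimpleGraph V)
    (w : V → ℝ) (S : Finset V) : Prop :=
  IsMaxIndepIn G Finset.univ S ∧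
  ∃ s : ℕ → V, S = (Finset.range S.card).image s ∧
    (∀ i < S.card, ∀ j < S.card, s i = s j → i = j) ∧
    ∀ i < S.card, ∀ v : V, (∀ j < i, v ≠ s j ∧ ¬ G.Adj v (s j)) → w v ≤ w (s i)

/-- A GMS policy: at every time and in every sample point, the schedule is a greedy
maximal schedule for the weights `w_l = Q_l[t]·C_l[t]`. -/
def IsGMSPolicy {V : Type*} [Fintype V] [DecidableEq V] {Ω : Type*} (G : SimpleGraph V)
    (GS S : ℕ → Ω → Finset V) (Q : ℕ → V → Ω → ℕ) : Prop :=
  ∀ t ω, IsGreedySchedule G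
    (fun l => (Q t l ω : ℝ) * (if l ∈ GS t ω then 1 else 0)) (S t ω)

/-- The 3-link path network `a - b - c` (links `0,1,2`, edges `{0,1}` and `{1,2}`). -/
def Gpath : SimpleGraph (Fin 3) :=
  SimpleGraph.fromRel (fun u v => (u = 0 ∧ v = 1) ∨ (u = 1 ∧ v = 2))

/-- The fading structure of Example B: `π({a,b}) = π({b,c}) = π({a,b,c}) = 1/3`. -/
noncomputable def piPath : Finset (Fin 3) → ℝ := fun J =>
  if J = {0, 1} ∨ J = {1, 2} ∨ J = {0, 1, 2} then 1 / 3 else 0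

/-! In every single state the standard local pooling factor is `1`: each nonempty `L` carries
nonnegative link weights under which all maximal independent sets of `L` weigh the same (on the
path `a - b - c` the weights `1, 2, 1`), so `φ₂ ≤ σ φ₁` on `L` for two convex combinations of
them forces `σ ≥ 1`. Under fading, however, the two schedule profiles may differ from state to
state: `φ₁` serves `b` in the states `{a, b}`, `{b, c}` and `{a, c}` in the full state, giving
`(1/3, 2/3, 1/3)`, while `φ₂` serves `a` resp. `c` with probability `4/5` in the partial states
and `b` in the full state, giving `(4/15, 7/15, 4/15) ≤ (4/5) φ₁`. -/

def poolingRatios {V : Type*} (C : Set (V → ℝ)) (L : Finset V) : Set ℝ :=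
  {σ | 0 ≤ σ ∧ ∃ φ1 ∈ C, ∃ φ2 ∈ C, ∀ v ∈ L, φ2 v ≤ σ * φ1 v}

section PoolingRatios

variable {V : Type*} {C : Set (V → ℝ)} {L : Finset V}

lemma bddBelow_poolingRatios : BddBelow (poolingRatios C L) := ⟨0, fun _ h => h.1⟩

lemma sInf_poolingRatios_nonneg : 0 ≤ sInf (poolingRatios C L) :=
  Real.sInf_nonneg fun _ h => h.1

lemma one_mem_poolingRatios (hC : C.Nonempty) : 1 ∈ poolingRatios C L :=
  let ⟨φ, hφ⟩ := hC
  ⟨zero_le_one, φ, hφ, φ, hφ, fun v _ => (one_mul (φ v)).ge⟩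

lemma one_le_of_mem_poolingRatios {α : V → ℝ} {c : ℝ} (hα : ∀ v ∈ L, 0 ≤ α v) (hc : 0 < c)
    (hC : ∀ φ ∈ C, ∑ v ∈ L, α v * φ v = c) {σ : ℝ} (hσ : σ ∈ poolingRatios C L) : 1 ≤ σ := by
  obtain ⟨-, φ1, h1, φ2, h2, hle⟩ := hσ
  have : c ≤ σ * c :=
    calc c = ∑ v ∈ L, α v * φ2 v := (hC φ2 h2).symm
      _ ≤ ∑ v ∈ L, α v * (σ * φ1 v) :=
        Finset.sum_le_sum fun v hv => mul_le_mul_of_nonneg_left (hle v hv) (hα v hv)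
      _ = σ * ∑ v ∈ L, α v * φ1 v := by
        rw [Finset.mul_sum]; exact Finset.sum_congr rfl fun v _ => mul_left_comm _ _ _
      _ = σ * c := by rw [hC φ1 h1]
  nlinarith

lemma sInf_poolingRatios_eq_one (hne : C.Nonempty) {α : V → ℝ} {c : ℝ}
    (hα : ∀ v ∈ L, 0 ≤ α v) (hc : 0 < c) (hC : ∀ φ ∈ C, ∑ v ∈ L, α v * φ v = c) :
    sInf (poolingRatios C L) = 1 :=
  le_antisymm (csInf_le bddBelow_poolingRatios (one_mem_poolingRatios hne))
    (le_csInf ⟨1, one_mem_poolingRatios hne⟩ fun _ => one_le_of_mem_poolingRatios hα hc hC)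

end PoolingRatios

section MaximalIndependentSets

variable {V : Type*} (G : SimpleGraph V)

instance [DecidableEq V] [DecidableRel G.Adj] (J S : Finset V) : Decidable (IsIndepIn G J S) :=
  inferInstanceAs (Decidable (S ⊆ J ∧ ∀ u ∈ S, ∀ v ∈ S, ¬ G.Adj u v))

instance [Fintype V] [DecidableEq V] [DecidableRel G.Adj] (J S : Finset V) :
    Decidable (IsMaxIndepIn G J S) :=
  inferInstanceAs (Decidable (IsIndepIn G J S ∧ ∀ T, IsIndepIn G J T → S ⊆ T → S = T))

lemma exists_isMaxIndepIn (J : Finset V) : ∃ S, IsMaxIndepIn G J S := by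
  have hfin : {S | IsIndepIn G J S}.Finite :=
    J.powerset.finite_toSet.subset fun S hS => Finset.mem_powerset.2 hS.1
  obtain ⟨S, hS, hmax⟩ := hfin.exists_maximalFor Finset.card _
    ⟨∅, Finset.empty_subset J, by simp⟩
  exact ⟨S, hS, fun T hT hST =>
    Finset.eq_of_subset_of_card_le hST (hmax hT (Finset.card_le_card hST))⟩

variable [DecidableEq V]

lemma indVec_mem_CHM {J S : Finset V} (h : IsMaxIndepIn G J S) : indVec S ∈ CHM G J :=
  subset_convexHull ℝ _ ⟨S, h, rfl⟩

lemma CHM_nonempty (J : Finset V) : (CHM G J).Nonempty :=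
  let ⟨_, hS⟩ := exists_isMaxIndepIn G J
  ⟨_, indVec_mem_CHM G hS⟩

lemma smul_add_smul_mem_CHM {J S T : Finset V} (hS : IsMaxIndepIn G J S)
    (hT : IsMaxIndepIn G J T) {a b : ℝ} (ha : 0 ≤ a) (hb : 0 ≤ b) (hab : a + b = 1) :
    a • indVec S + b • indVec T ∈ CHM G J :=
  convex_convexHull ℝ _ (indVec_mem_CHM G hS) (indVec_mem_CHM G hT) ha hb hab

lemma sum_mul_indVec {S L : Finset V} (hS : S ⊆ L) (α : V → ℝ) :
    ∑ v ∈ L, α v * indVec S v = ∑ v ∈ S, α v := by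
  simp only [indVec, mul_ite, mul_one, mul_zero]
  rw [Finset.sum_ite_mem, Finset.inter_eq_right.2 hS]

lemma sum_mul_eq_of_mem_CHM {L : Finset V} {α : V → ℝ} {c : ℝ}
    (h : ∀ S, IsMaxIndepIn G L S → ∑ v ∈ S, α v = c) {φ : V → ℝ} (hφ : φ ∈ CHM G L) :
    ∑ v ∈ L, α v * φ v = c := by
  have hlin : IsLinearMap ℝ fun x : V → ℝ => ∑ v ∈ L, α v * x v :=
    ⟨fun x y => by simp only [Pi.add_apply, mul_add, Finset.sum_add_distrib],
      fun a x => by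
        simp only [Pi.smul_apply, smul_eq_mul, Finset.mul_sum]
        exact Finset.sum_congr rfl fun v _ => mul_left_comm _ _ _⟩
  refine convexHull_min ?_ (convex_hyperplane hlin c) hφ
  rintro _ ⟨S, hS, rfl⟩
  exact (sum_mul_indVec hS.1.1 α).trans (h S hS)

end MaximalIndependentSets

lemma stdLPF_eq_one_of_weights {W : Type*} [Fintype W] [DecidableEq W] [Nonempty W]
    (H : SimpleGraph W) (α : Finset W → W → ℕ)
    (hconst : ∀ L S S' : Finset W, IsMaxIndepIn H L S → IsMaxIndepIn H L S' →
      ∑ v ∈ S, α L v = ∑ v ∈ S', α L v)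
    (hpos : ∀ L : Finset W, L.Nonempty → ∀ S, IsMaxIndepIn H L S → 0 < ∑ v ∈ S, α L v) :
    stdLPF W H = 1 := by
  have hL : Set.EqOn (fun L => sInf (poolingRatios (CHM H L) L)) (fun _ => 1)
      {L | L.Nonempty} := by
    intro L (hL : L.Nonempty)
    obtain ⟨S₀, hS₀⟩ := exists_isMaxIndepIn H L
    refine sInf_poolingRatios_eq_one (CHM_nonempty H L) (α := fun v => (α L v : ℝ))
      (c := ∑ v ∈ S₀, (α L v : ℝ)) (fun v _ => Nat.cast_nonneg _)
      (by exact_mod_cast hpos L hL S₀ hS₀) fun φ hφ => sum_mul_eq_of_mem_CHM H ?_ hφ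
    intro S hS
    exact_mod_cast hconst L S S₀ hS hS₀
  change sInf ((fun L => sInf (poolingRatios (CHM H L) L)) '' {L | L.Nonempty}) = 1
  rw [hL.image_eq, Set.Nonempty.image_const (s := {L : Finset W | L.Nonempty}) ⟨_, Finset.univ_nonempty⟩, csInf_singleton]

section Fading

variable {V : Type*} [Fintype V] [DecidableEq V] (G : SimpleGraph V) (π : Finset V → ℝ)

lemma sigmaG_le_sigmaL {L : Finset V} (hL : L.Nonempty) : sigmaG G π ≤ sigmaL G π L :=
  csInf_le ⟨0, by rintro _ ⟨L, -, rfl⟩; exact sInf_poolingRatios_nonneg⟩ ⟨L, hL, rfl⟩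

lemma sum_smul_mem_Phi {L : Finset V} {η : Finset V → V → ℝ}
    (hη : ∀ J, π J ≠ 0 → η J ∈ CHM G (J ∩ L)) : ∑ J, π J • η J ∈ Phi G π L := by
  classical
  let η' J := if π J = 0 then (CHM_nonempty G (J ∩ L)).some else η J
  refine ⟨η', fun J => ?_, Finset.sum_congr rfl fun J _ => ?_⟩
  · by_cases hJ : π J = 0
    · simpa [η', hJ] using (CHM_nonempty G (J ∩ L)).some_mem
    · simpa [η', hJ] using hη J hJ
  · by_cases hJ : π J = 0 <;> simp [η', hJ]

lemma sigmaG_le_of_le_smul {L : Finset V} (hL : L.Nonempty) {σ : ℝ} (hσ : 0 ≤ σ)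
    {η₁ η₂ : Finset V → V → ℝ} (h₁ : ∀ J, π J ≠ 0 → η₁ J ∈ CHM G (J ∩ L))
    (h₂ : ∀ J, π J ≠ 0 → η₂ J ∈ CHM G (J ∩ L))
    (hle : ∀ v ∈ L, (∑ J, π J • η₂ J) v ≤ σ * (∑ J, π J • η₁ J) v) : sigmaG G π ≤ σ :=
  (sigmaG_le_sigmaL G π hL).trans <| csInf_le bddBelow_poolingRatios
    ⟨hσ, _, sum_smul_mem_Phi G π h₁, _, sum_smul_mem_Phi G π h₂, hle⟩

end Fading

section ExampleB

instance : DecidableRel Gpath.Adj := by unfold Gpath; infer_instance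

instance {V : Type*} {G : SimpleGraph V} [DecidableRel G.Adj] {s : Set V} :
    DecidableRel (G.induce s).Adj := fun u v => inferInstanceAs (Decidable (G.Adj u v))

lemma sum_piPath_mul (g : Finset (Fin 3) → ℝ) :
    ∑ J, piPath J * g J = (g {0, 1} + g {1, 2} + g {0, 1, 2}) / 3 := by
  simp only [piPath, ite_mul, zero_mul]
  rw [← Finset.sum_filter, show Finset.univ.filter (fun J : Finset (Fin 3) =>
    J = {0, 1} ∨ J = {1, 2} ∨ J = {0, 1, 2}) = {{0, 1}, {1, 2}, {0, 1, 2}} by decide,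
    Finset.sum_insert (by decide), Finset.sum_insert (by decide), Finset.sum_singleton]
  ring

lemma sum_piPath_smul_apply (η : Finset (Fin 3) → Fin 3 → ℝ) (v : Fin 3) :
    (∑ J, piPath J • η J) v = (η {0, 1} v + η {1, 2} v + η {0, 1, 2} v) / 3 := by
  simp only [Finset.sum_apply, Pi.smul_apply, smul_eq_mul]
  exact sum_piPath_mul fun J => η J v

lemma piPath_ne_zero {J : Finset (Fin 3)} (hJ : piPath J ≠ 0) :
    J = {0, 1} ∨ J = {1, 2} ∨ J = {0, 1, 2} := by
  by_contra h
  exact hJ (if_neg h)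

noncomputable def etaDominating : Finset (Fin 3) → Fin 3 → ℝ := fun J =>
  if J = {0, 1, 2} then indVec {0, 2} else indVec {1}

noncomputable def etaDominated : Finset (Fin 3) → Fin 3 → ℝ := fun J =>
  if J = {0, 1} then (4 / 5 : ℝ) • indVec {0} + (1 / 5 : ℝ) • indVec {1}
  else if J = {1, 2} then (4 / 5 : ℝ) • indVec {2} + (1 / 5 : ℝ) • indVec {1}
  else indVec {1}

lemma etaDominating_mem {J : Finset (Fin 3)} (hJ : piPath J ≠ 0) :
    etaDominating J ∈ CHM Gpath (J ∩ Finset.univ) := by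
  rw [Finset.inter_univ]
  rcases piPath_ne_zero hJ with rfl | rfl | rfl <;> exact indVec_mem_CHM _ (by decide)

lemma etaDominated_mem {J : Finset (Fin 3)} (hJ : piPath J ≠ 0) :
    etaDominated J ∈ CHM Gpath (J ∩ Finset.univ) := by
  rw [Finset.inter_univ]
  rcases piPath_ne_zero hJ with rfl | rfl | rfl <;> simp +decide only [etaDominated]
  · exact smul_add_smul_mem_CHM _ (by decide) (by decide) (by norm_num) (by norm_num) (by norm_num)
  · exact smul_add_smul_mem_CHM _ (by decide) (by decide) (by norm_num) (by norm_num) (by norm_num)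
  · exact indVec_mem_CHM _ (by decide)

lemma sigmaG_Gpath_le : sigmaG Gpath piPath ≤ 4 / 5 := by
  refine sigmaG_le_of_le_smul Gpath piPath Finset.univ_nonempty (by norm_num)
    (fun _ => etaDominating_mem) (fun _ => etaDominated_mem) fun v _ => ?_
  rw [sum_piPath_smul_apply, sum_piPath_smul_apply]
  fin_cases v <;> simp +decide [etaDominating, etaDominated, indVec] <;> norm_num

lemma stdLPF_induce_zero_one : stdLPF _ (Gpath.induce (↑({0, 1} : Finset (Fin 3)))) = 1 :=
  have : Nonempty (↑({0, 1} : Finset (Fin 3)) : Set (Fin 3)) := ⟨⟨0, by simp⟩⟩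
  stdLPF_eq_one_of_weights _ (fun L v => if v ∈ L then 1 else 0) (by decide) (by decide)

lemma stdLPF_induce_one_two : stdLPF _ (Gpath.induce (↑({1, 2} : Finset (Fin 3)))) = 1 :=
  have : Nonempty (↑({1, 2} : Finset (Fin 3)) : Set (Fin 3)) := ⟨⟨1, by simp⟩⟩
  stdLPF_eq_one_of_weights _ (fun L v => if v ∈ L then 1 else 0) (by decide) (by decide)

lemma stdLPF_induce_zero_one_two :
    stdLPF _ (Gpath.induce (↑({0, 1, 2} : Finset (Fin 3)))) = 1 :=
  have : Nonempty (↑({0, 1, 2} : Finset (Fin 3)) : Set (Fin 3)) := ⟨⟨0, by simp⟩⟩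
  stdLPF_eq_one_of_weights _
    (fun L v => (if v ∈ L then 1 else 0) + (if L = Finset.univ ∧ (v : Fin 3) = 1 then 1 else 0))
    (by decide) (by decide)

end ExampleB

/-- **Averaging fails.** Each fading state of Example B induces a subgraph with standard
local pooling factor `1`, yet `σ*_G(π) ≤ 4/5 < 1 = Σ_J π(J)·σ*(G[J])`: the Fading-LPF is
strictly smaller than the `π`-weighted average of the per-state local pooling factors. -/
theorem example_B_averaging_fails :
    stdLPF _ (SimpleGraph.induce (↑({0, 1} : Finset (Fin 3))) Gpath) = 1 ∧
    stdLPF _ (SimpleGraph.induce (↑({1, 2} : Finset (Fin 3))) Gpath) = 1 ∧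
    stdLPF _ (SimpleGraph.induce (↑({0, 1, 2} : Finset (Fin 3))) Gpath) = 1 ∧
    sigmaG Gpath piPath ≤ 4 / 5 ∧
    (∑ J : Finset (Fin 3), piPath J * stdLPF _ (SimpleGraph.induce (↑J) Gpath)) = 1 ∧
    sigmaG Gpath piPath < ∑ J : Finset (Fin 3), piPath J * stdLPF _ (SimpleGraph.induce (↑J) Gpath) := by
  have hAverage : ∑ J : Finset (Fin 3), piPath J * stdLPF _ (Gpath.induce (↑J)) = 1 := by
    rw [sum_piPath_mul fun J => stdLPF _ (Gpath.induce (↑J)), stdLPF_induce_zero_one,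
      stdLPF_induce_one_two, stdLPF_induce_zero_one_two]
    norm_num
  refine ⟨stdLPF_induce_zero_one, stdLPF_induce_one_two, stdLPF_induce_zero_one_two,
    sigmaG_Gpath_le, hAverage, ?_⟩
  rw [hAverage]
  exact sigmaG_Gpath_le.trans_lt (by norm_num)
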